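/- arXiv:2310.04543 — 2 statements merged into one kernel-verified Lean document; each statement's English description precedes it below -/
import Mathlib

section
/- For real m > 0, the infinite product ∏_{p=0}^∞ ( (e^{−2m·3^{p+1}} + 1)^{2/3} · cosh²(m·3^p) / (2·cosh(2m·3^p) − 1) )^{3^(−2p−1)} converges to (e^{−2m} + 1)/2^{3/4}. -/
open Real Finset Filter

noncomputable def Aa (m : ℝ) (p : ℕ) : ℝ := Real.exp (-2 * m * (3:ℝ)^p) + 1

lemma Aa_pos (m : ℝ) (p : ℕ) : 0 < Aa m p := by unfold Aa; positivity

lemma term_eq (m : ℝ) (p : ℕ) :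
    ((Real.exp (-2 * m * (3:ℝ)^(p+1)) + 1) ^ ((2/3 : ℝ))
        * (Real.cosh (m * (3:ℝ)^p))^2
        / (2 * Real.cosh (2 * m * (3:ℝ)^p) - 1)) ^ ((((9:ℝ)^p)⁻¹ / 3 : ℝ))
    = Aa m p ^ (((9:ℝ)^p)⁻¹) * (Aa m (p+1) ^ (((9:ℝ)^(p+1))⁻¹))⁻¹
        * ((4:ℝ) ^ ((((9:ℝ)^p)⁻¹ : ℝ) / 3))⁻¹ := by
  set E : ℝ := Real.exp (m * (3:ℝ)^p) with hE
  have hE0 : 0 < E := Real.exp_pos _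
  have hcosh2 : Real.cosh (2*m*(3:ℝ)^p) = (E^2 + (E^2)⁻¹)/2 := by
    rw [Real.cosh_eq, Real.exp_neg, show (2:ℝ)*m*(3:ℝ)^p = ((2:ℕ):ℝ)*(m*(3:ℝ)^p) by push_cast; ring, Real.exp_nat_mul]
  have hap : Aa m p = (E^2)⁻¹ + 1 := by
    rw [Aa, show -2*m*(3:ℝ)^p = -(((2:ℕ):ℝ)*(m*(3:ℝ)^p)) by push_cast; ring,
      Real.exp_neg, Real.exp_nat_mul]
  have hap1 : Aa m (p+1) = (E^6)⁻¹ + 1 := by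
    rw [Aa, show -2*m*(3:ℝ)^(p+1) = -(((6:ℕ):ℝ)*(m*(3:ℝ)^p)) by push_cast; ring,
      Real.exp_neg, Real.exp_nat_mul]
  have hA0 : 0 < Aa m p := Aa_pos m p
  have hA1 : 0 < Aa m (p+1) := Aa_pos m (p+1)
  have hD : 0 < 2 * Real.cosh (2*m*(3:ℝ)^p) - 1 := by
    have := Real.one_le_cosh (2*m*(3:ℝ)^p); linarith
  have halg : (Real.cosh (m*(3:ℝ)^p))^2 / (2 * Real.cosh (2*m*(3:ℝ)^p) - 1)
      = (Aa m p)^(3:ℕ) / (4 * Aa m (p+1)) := by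
    rw [show Real.cosh (m*(3:ℝ)^p) = (E + E⁻¹)/2 by rw [Real.cosh_eq, Real.exp_neg],
      hcosh2, hap, hap1]
    rw [div_eq_div_iff (by rw [← hcosh2, hap1] at *; nlinarith [sq_nonneg (E^2 - 1), pow_pos hE0 2, pow_pos hE0 6]) (by positivity)]
    field_simp
    ring
  have hneg : (Aa m (p+1)) ^ (-(1/3) : ℝ) = (Aa m (p+1)) ^ ((2/3):ℝ) * (Aa m (p+1))⁻¹ := by
    rw [← Real.rpow_neg_one (Aa m (p+1)), ← Real.rpow_add hA1]; norm_num
  have hbase : (Real.exp (-2 * m * (3:ℝ)^(p+1)) + 1) ^ ((2/3 : ℝ))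
        * (Real.cosh (m * (3:ℝ)^p))^2
        / (2 * Real.cosh (2 * m * (3:ℝ)^p) - 1)
      = (Aa m p) ^ ((3:ℝ)) * (Aa m (p+1)) ^ (-(1/3) : ℝ) / 4 := by
    have h1 : Real.exp (-2 * m * (3:ℝ)^(p+1)) + 1 = Aa m (p+1) := rfl
    have h3 : (Aa m p) ^ ((3:ℝ)) = (Aa m p)^(3:ℕ) := by
      rw [← Real.rpow_natCast (Aa m p) 3]; norm_num
    rw [h1, hneg, h3, mul_div_assoc, halg]
    have := Real.rpow_pos_of_pos hA1 ((2/3):ℝ)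
    field_simp
  rw [hbase]
  have hb1 : (0:ℝ) ≤ (Aa m p) ^ ((3:ℝ)) := (Real.rpow_pos_of_pos hA0 _).le
  have hb2 : (0:ℝ) ≤ (Aa m (p+1)) ^ (-(1/3) : ℝ) := (Real.rpow_pos_of_pos hA1 _).le
  rw [Real.div_rpow (by positivity) (by norm_num : (0:ℝ) ≤ 4),
    Real.mul_rpow hb1 hb2, ← Real.rpow_mul hA0.le, ← Real.rpow_mul hA1.le,
    show (3:ℝ) * (((9:ℝ)^p)⁻¹/3) = ((9:ℝ)^p)⁻¹ by ring,
    show (-(1/3):ℝ) * (((9:ℝ)^p)⁻¹/3) = -(((9:ℝ)^(p+1))⁻¹) by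
      rw [pow_succ]
      have : ((9:ℝ)^p) ≠ 0 := by positivity
      field_simp; ring,
    Real.rpow_neg hA1.le, div_eq_mul_inv]

lemma cancel_aux (A0 X Y Z W : ℝ) (hX : X ≠ 0) (hY : Y ≠ 0) (hZ : Z ≠ 0) (hW : W ≠ 0) :
    A0 * X⁻¹ * Y⁻¹ * (X * W⁻¹ * Z⁻¹) = A0 * W⁻¹ * (Y * Z)⁻¹ := by
  field_simp

lemma prod_form (m : ℝ) (n : ℕ) :
    (∏ p ∈ Finset.range n,
        ((Real.exp (-2 * m * (3:ℝ)^(p+1)) + 1) ^ ((2/3 : ℝ))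
            * (Real.cosh (m * (3:ℝ)^p))^2
            / (2 * Real.cosh (2 * m * (3:ℝ)^p) - 1)) ^ ((((9:ℝ)^p)⁻¹ / 3 : ℝ)))
    = Aa m 0 * (Aa m n ^ (((9:ℝ)^n)⁻¹))⁻¹
        * ((4:ℝ) ^ ((3:ℝ)/8 * (1 - ((9:ℝ)^n)⁻¹)))⁻¹ := by
  induction n with
  | zero =>
    simp only [Finset.prod_range_zero, pow_zero, inv_one, Real.rpow_one, mul_one,
      sub_self, mul_zero, Real.rpow_zero]
    rw [mul_inv_cancel₀ (Aa_pos m 0).ne']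
  | succ n ih =>
    rw [Finset.prod_range_succ, ih, term_eq]
    have h4 : (4:ℝ)^((3:ℝ)/8*(1-((9:ℝ)^n)⁻¹)) * (4:ℝ)^((((9:ℝ)^n)⁻¹:ℝ)/3)
        = (4:ℝ)^((3:ℝ)/8*(1-((9:ℝ)^(n+1))⁻¹)) := by
      rw [← Real.rpow_add (by norm_num)]
      congr 1
      rw [pow_succ]
      have h9 : ((9:ℝ)^n) ≠ 0 := by positivity
      field_simp
      ring
    have hX : (Aa m n ^ (((9:ℝ)^n)⁻¹)) ≠ 0 := (Real.rpow_pos_of_pos (Aa_pos m n) _).ne'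
    have hY : ((4:ℝ)^((3:ℝ)/8*(1-((9:ℝ)^n)⁻¹))) ≠ 0 := (Real.rpow_pos_of_pos (by norm_num) _).ne'
    have hZ : ((4:ℝ)^((((9:ℝ)^n)⁻¹:ℝ)/3)) ≠ 0 := (Real.rpow_pos_of_pos (by norm_num) _).ne'
    rw [← h4]
    exact cancel_aux _ _ _ _ _ hX hY hZ (Real.rpow_pos_of_pos (Aa_pos m (n+1)) _).ne'

theorem levett_cosh_exp_infinite_product (m : ℝ) (hm : 0 < m) :
    Filter.Tendsto (fun n : ℕ =>
        ∏ p ∈ Finset.range n,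
          ((Real.exp (-2 * m * (3:ℝ)^(p+1)) + 1) ^ ((2/3 : ℝ))
              * (Real.cosh (m * (3:ℝ)^p))^2
              / (2 * Real.cosh (2 * m * (3:ℝ)^p) - 1)) ^ ((((9:ℝ)^p)⁻¹ / 3 : ℝ)))
      Filter.atTop (nhds ((Real.exp (-2 * m) + 1) / (2:ℝ) ^ ((3/4 : ℝ)))) := by
  refine Filter.Tendsto.congr (fun n => (prod_form m n).symm) ?_
  have he : Filter.Tendsto (fun n : ℕ => ((9:ℝ)^n)⁻¹) Filter.atTop (nhds 0) :=
    tendsto_inv_atTop_zero.comp (tendsto_pow_atTop_atTop_of_one_lt (by norm_num : (1:ℝ) < 9))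
  -- Aa m n → 1
  have hA : Filter.Tendsto (fun n : ℕ => Aa m n) Filter.atTop (nhds 1) := by
    have h1 : Filter.Tendsto (fun n : ℕ => -2 * m * (3:ℝ)^n) Filter.atTop Filter.atBot := by
      apply Filter.Tendsto.const_mul_atTop_of_neg (by linarith : -2 * m < 0)
      exact tendsto_pow_atTop_atTop_of_one_lt (by norm_num : (1:ℝ) < 3)
    have h2 : Filter.Tendsto (fun n : ℕ => Real.exp (-2 * m * (3:ℝ)^n)) Filter.atTop (nhds 0) :=
      Real.tendsto_exp_atBot.comp h1
    have := h2.add_const 1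
    simpa [Aa] using this
  -- Aa m n ^ e n → 1
  have hpow : Filter.Tendsto (fun n : ℕ => Aa m n ^ (((9:ℝ)^n)⁻¹)) Filter.atTop (nhds 1) := by
    have hlog : Filter.Tendsto (fun n : ℕ => Real.log (Aa m n)) Filter.atTop (nhds 0) := by
      have := ((Real.continuousAt_log (by norm_num : (1:ℝ) ≠ 0)).tendsto).comp hA
      simpa [Function.comp_def] using this
    have hm2 : Filter.Tendsto (fun n : ℕ => Real.log (Aa m n) * ((9:ℝ)^n)⁻¹)
        Filter.atTop (nhds 0) := by
      simpa using hlog.mul he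
    have := (Real.continuous_exp.tendsto 0).comp hm2
    simp only [Real.exp_zero] at this
    refine this.congr fun n => ?_
    rw [Function.comp_apply, ← Real.rpow_def_of_pos (Aa_pos m n)]
  -- 4 ^ (3/8 * (1 - e n)) → 4 ^ (3/8)
  have h4 : Filter.Tendsto (fun n : ℕ => (4:ℝ)^((3:ℝ)/8 * (1 - ((9:ℝ)^n)⁻¹)))
      Filter.atTop (nhds ((4:ℝ)^((3:ℝ)/8))) := by
    have hexp : Filter.Tendsto (fun n : ℕ => (3:ℝ)/8 * (1 - ((9:ℝ)^n)⁻¹))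
        Filter.atTop (nhds ((3:ℝ)/8)) := by
      have := (tendsto_const_nhds (x := (3:ℝ)/8)).mul ((tendsto_const_nhds (x := (1:ℝ))).sub he)
      simpa using this
    have hc : ContinuousAt (fun t : ℝ => (4:ℝ)^t) ((3:ℝ)/8) :=
      Real.continuousAt_const_rpow (by norm_num)
    exact (hc.tendsto).comp hexp
  have hmain := (tendsto_const_nhds (x := Aa m 0)).mul (hpow.inv₀ one_ne_zero)
    |>.mul (h4.inv₀ (Real.rpow_pos_of_pos (by norm_num) _).ne')
  have h42 : (4:ℝ)^((3:ℝ)/8) = (2:ℝ)^((3/4:ℝ)) := by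
    rw [show (4:ℝ) = (2:ℝ)^(2:ℕ) by norm_num, ← Real.rpow_natCast 2 2,
      ← Real.rpow_mul (by norm_num)]
    norm_num
  have hval : Aa m 0 * (1:ℝ)⁻¹ * ((4:ℝ)^((3:ℝ)/8))⁻¹
      = (Real.exp (-2 * m) + 1) / (2:ℝ) ^ ((3/4 : ℝ)) := by
    rw [inv_one, mul_one, h42, div_eq_mul_inv,
      show Aa m 0 = Real.exp (-2*m) + 1 by simp [Aa]]
    ring
  rw [← hval]
  exact hmain
end

section
/- For every positive integer n and real x ≠ 0, the finite product ∏_{p=0}^{n-1} ( (2cosh(2·3^p x) − 1) / (2cosh(2·3^{p−1} x) − 1) )^{(1/2)·9^{−p}·(3^{p+1} − 1)} · ( cosh(3^{p−1} x)/cosh(3^p x) )^{9^{−p}·(3^{p+1} − 4)} equals ( cosh(3^n x)/cosh(3^{n−1} x) )^{(1/2)·9^{1−n}·(3^n − 1)}. -/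
open Real Finset

lemma two_cosh_sub_one_key (y : ℝ) :
    2 * Real.cosh (2 * y) - 1 = Real.cosh (3 * y) / Real.cosh y := by
  have h := Real.cosh_pos y
  rw [Real.cosh_three_mul, Real.cosh_two_mul]
  field_simp
  nlinarith [Real.cosh_sq y]

lemma levett_aux (x : ℝ) (n : ℕ) :
    ∏ p ∈ Finset.range n,
        ((2 * Real.cosh (2 * (3:ℝ)^p * x) - 1)
            / (2 * Real.cosh (2 * ((3:ℝ)^p / 3) * x) - 1))
              ^ (((1/2) * ((9:ℝ)^p)⁻¹ * (3 * (3:ℝ)^p - 1) : ℝ))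
          * (Real.cosh (((3:ℝ)^p / 3) * x) / Real.cosh ((3:ℝ)^p * x))
              ^ ((((9:ℝ)^p)⁻¹ * (3 * (3:ℝ)^p - 4) : ℝ))
      = (Real.cosh ((3:ℝ)^n * x) / Real.cosh (((3:ℝ)^n / 3) * x))
          ^ (((1/2) * 9 * ((9:ℝ)^n)⁻¹ * ((3:ℝ)^n - 1) : ℝ)) := by
  induction n with
  | zero =>
      norm_num
  | succ n ih =>
      rw [Finset.prod_range_succ, ih]
      have hA : (0:ℝ) < Real.cosh ((3:ℝ)^(n+1) * x) := Real.cosh_pos _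
      have hB : (0:ℝ) < Real.cosh ((3:ℝ)^n * x) := Real.cosh_pos _
      have hC : (0:ℝ) < Real.cosh (((3:ℝ)^n / 3) * x) := Real.cosh_pos _
      have h1 : 2 * Real.cosh (2 * (3:ℝ)^n * x) - 1
          = Real.cosh ((3:ℝ)^(n+1) * x) / Real.cosh ((3:ℝ)^n * x) := by
        have h := two_cosh_sub_one_key ((3:ℝ)^n * x)
        rw [show (2:ℝ) * (3:ℝ)^n * x = 2 * ((3:ℝ)^n * x) by ring,
          show ((3:ℝ)^(n+1)) * x = 3 * ((3:ℝ)^n * x) by ring, h]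
      have h2 : 2 * Real.cosh (2 * ((3:ℝ)^n / 3) * x) - 1
          = Real.cosh ((3:ℝ)^n * x) / Real.cosh (((3:ℝ)^n / 3) * x) := by
        have h := two_cosh_sub_one_key (((3:ℝ)^n / 3) * x)
        rw [show (2:ℝ) * ((3:ℝ)^n / 3) * x = 2 * (((3:ℝ)^n / 3) * x) by ring,
          show ((3:ℝ)^n) * x = 3 * (((3:ℝ)^n / 3) * x) by ring]
        exact h
      rw [h1, h2, show ((3:ℝ)^(n+1) / 3) = (3:ℝ)^n by rw [pow_succ]; ring]
      set lA := Real.log (Real.cosh ((3:ℝ)^(n+1) * x)) with hlA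
      set lB := Real.log (Real.cosh ((3:ℝ)^n * x)) with hlB
      set lC := Real.log (Real.cosh (((3:ℝ)^n / 3) * x)) with hlC
      have P3 : (0:ℝ) < Real.cosh ((3:ℝ)^n * x) / Real.cosh (((3:ℝ)^n / 3) * x) :=
        div_pos hB hC
      have P4 : (0:ℝ) < Real.cosh ((3:ℝ)^(n+1) * x) / Real.cosh ((3:ℝ)^n * x) :=
        div_pos hA hB
      have P1 : (0:ℝ) < (Real.cosh ((3:ℝ)^(n+1) * x) / Real.cosh ((3:ℝ)^n * x))
          / (Real.cosh ((3:ℝ)^n * x) / Real.cosh (((3:ℝ)^n / 3) * x)) := div_pos P4 P3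
      have P2 : (0:ℝ) < Real.cosh (((3:ℝ)^n / 3) * x) / Real.cosh ((3:ℝ)^n * x) :=
        div_pos hC hB
      rw [Real.rpow_def_of_pos P3, Real.rpow_def_of_pos P1, Real.rpow_def_of_pos P2,
        Real.rpow_def_of_pos P4, ← Real.exp_add, ← Real.exp_add, Real.exp_eq_exp]
      rw [Real.log_div (ne_of_gt P4) (ne_of_gt P3), Real.log_div (ne_of_gt hA) (ne_of_gt hB),
        Real.log_div (ne_of_gt hB) (ne_of_gt hC), Real.log_div (ne_of_gt hC) (ne_of_gt hB)]
      have h9 : ((9:ℝ)^n) ≠ 0 := by positivity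
      have hγ : ((1/2) * 9 * ((9:ℝ)^n)⁻¹ * ((3:ℝ)^n - 1) : ℝ)
          = (1/2) * ((9:ℝ)^n)⁻¹ * (3 * (3:ℝ)^n - 1) + ((9:ℝ)^n)⁻¹ * (3 * (3:ℝ)^n - 4) := by
        field_simp
        ring
      have hα : ((1/2) * ((9:ℝ)^n)⁻¹ * (3 * (3:ℝ)^n - 1) : ℝ)
          = (1/2) * 9 * ((9:ℝ)^(n+1))⁻¹ * ((3:ℝ)^(n+1) - 1) := by
        field_simp
        ring
      linear_combination (lB - lC) * hγ + (lA - lB) * hα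

theorem levett_cosh_ratio_product (n : ℕ) (hn : 0 < n) (x : ℝ) (hx : x ≠ 0) :
    ∏ p ∈ Finset.range n,
        ((2 * Real.cosh (2 * (3:ℝ)^p * x) - 1)
            / (2 * Real.cosh (2 * ((3:ℝ)^p / 3) * x) - 1))
              ^ (((1/2) * ((9:ℝ)^p)⁻¹ * (3 * (3:ℝ)^p - 1) : ℝ))
          * (Real.cosh (((3:ℝ)^p / 3) * x) / Real.cosh ((3:ℝ)^p * x))
              ^ ((((9:ℝ)^p)⁻¹ * (3 * (3:ℝ)^p - 4) : ℝ))
      = (Real.cosh ((3:ℝ)^n * x) / Real.cosh (((3:ℝ)^n / 3) * x))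
          ^ (((1/2) * 9 * ((9:ℝ)^n)⁻¹ * ((3:ℝ)^n - 1) : ℝ)) := by
  exact levett_aux x n
end
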